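/- Branching of circuits is associative up to isomorphism: (λ₂ ?_{ρ₁} λ₃) ?_{ρ₃} λ₄ ≅ λ₂ ?_{ρ₄} (λ₃ ?_{ρ₂} λ₄), provided λ₂, λ₃, λ₄ share common adjoint domains λ₀ (invars) and λ₁ (outvars). -/

import Mathlib

/-- A bare circuit: variables, units, input/output flows with their structure maps. -/
structure Circuit where
  V : Type
  U : Type
  I : Type
  O : Type
  s : I → V
  t : O → V
  tau : I → U
  sigma : O → U
  c : V → Bool   -- `true` = control (unit) type, `false` = Boolean type

/-- Invars: variables not in the image of the output-flow target map. -/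
def Circuit.invars (C : Circuit) : Set C.V := {v | v ∉ Set.range C.t}

/-- Outvars: variables not in the image of the input-flow source map. -/
def Circuit.outvars (C : Circuit) : Set C.V := {v | v ∉ Set.range C.s}

/-- The relation generating the pushout identifications on variables:
`f(a)` (in the left circuit) is glued to `g(a)` (in the right circuit). -/
def poRel {A X Y : Type} (f : A → X) (g : A → Y) : X ⊕ Y → X ⊕ Y → Prop :=
  fun p q => ∃ a, p = Sum.inl (f a) ∧ q = Sum.inr (g a)

/-- The pushout `C +_{λ₀} D` of a span with a trivial apex circuit (no units,
no flows, variable type `A`), computed componentwise: variables are the quotient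
of the disjoint union by the gluing relation; units and flows are disjoint
unions (the apex contributes none). -/
def po (C D : Circuit) {A : Type} (f : A → C.V) (g : A → D.V)
    (hc : ∀ a, C.c (f a) = D.c (g a)) : Circuit where
  V := Quot (poRel f g)
  U := C.U ⊕ D.U
  I := C.I ⊕ D.I
  O := C.O ⊕ D.O
  s := Sum.elim (fun i => Quot.mk (poRel f g) (Sum.inl (C.s i)))
                (fun i => Quot.mk (poRel f g) (Sum.inr (D.s i)))
  t := Sum.elim (fun o => Quot.mk (poRel f g) (Sum.inl (C.t o)))
                (fun o => Quot.mk (poRel f g) (Sum.inr (D.t o)))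
  tau := Sum.map C.tau D.tau
  sigma := Sum.map C.sigma D.sigma
  c := Quot.lift (Sum.elim C.c D.c) (by rintro p q ⟨a, rfl, rfl⟩; simpa using hc a)

/-- The canonical morphism (on variables) from the left circuit into the pushout. -/
def poInl (C D : Circuit) {A : Type} (f : A → C.V) (g : A → D.V)
    (hc : ∀ a, C.c (f a) = D.c (g a)) (v : C.V) : (po C D f g hc).V :=
  Quot.mk (poRel f g) (Sum.inl v)

/-- The canonical morphism (on variables) from the right circuit into the pushout. -/
def poInr (C D : Circuit) {A : Type} (f : A → C.V) (g : A → D.V)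
    (hc : ∀ a, C.c (f a) = D.c (g a)) (v : D.V) : (po C D f g hc).V :=
  Quot.mk (poRel f g) (Sum.inr v)

/-- Isomorphism of circuits: componentwise bijections commuting with all
structure maps and the typing. -/
structure CircIso (C D : Circuit) where
  eV : C.V ≃ D.V
  eU : C.U ≃ D.U
  eI : C.I ≃ D.I
  eO : C.O ≃ D.O
  hs : ∀ i, D.s (eI i) = eV (C.s i)
  ht : ∀ o, D.t (eO o) = eV (C.t o)
  htau : ∀ i, D.tau (eI i) = eU (C.tau i)
  hsigma : ∀ o, D.sigma (eO o) = eU (C.sigma o)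
  hc : ∀ v, D.c (eV v) = C.c v

/-! Gluing along a trivial circuit only identifies variables, so both iterated pushouts are the
disjoint union of the three circuits' units and flows, with variables `V₂ ⊔ V₃ ⊔ V₄` glued at
`f₂ a ∼ f₃ a ∼ f₄ a`; the reassociation of the sums respects these identifications. -/

section PoAssoc

variable (C₂ C₃ C₄ : Circuit) {A : Type}
    (f₂ : A → C₂.V) (f₃ : A → C₃.V) (f₄ : A → C₄.V)
    (h₂₃ : ∀ a, C₂.c (f₂ a) = C₃.c (f₃ a))
    (h₃₄ : ∀ a, C₃.c (f₃ a) = C₄.c (f₄ a))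

def poAssocLeft : Circuit :=
  po (po C₂ C₃ f₂ f₃ h₂₃) C₄ (fun a => poInl C₂ C₃ f₂ f₃ h₂₃ (f₂ a)) f₄
    (fun a => (h₂₃ a).trans (h₃₄ a))

def poAssocRight : Circuit :=
  po C₂ (po C₃ C₄ f₃ f₄ h₃₄) f₂ (fun a => poInl C₃ C₄ f₃ f₄ h₃₄ (f₃ a)) h₂₃

variable {C₂ C₃ C₄ f₂ f₃ f₄ h₂₃ h₃₄}

theorem poAssocLeft_ind {motive : (poAssocLeft C₂ C₃ C₄ f₂ f₃ f₄ h₂₃ h₃₄).V → Prop}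
    (inl_inl : ∀ v, motive (Quot.mk _ (.inl (Quot.mk _ (.inl v)))))
    (inl_inr : ∀ v, motive (Quot.mk _ (.inl (Quot.mk _ (.inr v)))))
    (inr : ∀ v, motive (Quot.mk _ (.inr v))) (x) : motive x := by
  induction x using Quot.ind with | mk p => ?_
  rcases p with q | v₄
  · induction q using Quot.ind with | mk r => ?_
    rcases r with v₂ | v₃
    exacts [inl_inl v₂, inl_inr v₃]
  · exact inr v₄

theorem poAssocRight_ind {motive : (poAssocRight C₂ C₃ C₄ f₂ f₃ f₄ h₂₃ h₃₄).V → Prop}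
    (inl : ∀ v, motive (Quot.mk _ (.inl v)))
    (inr_inl : ∀ v, motive (Quot.mk _ (.inr (Quot.mk _ (.inl v)))))
    (inr_inr : ∀ v, motive (Quot.mk _ (.inr (Quot.mk _ (.inr v))))) (x) : motive x := by
  induction x using Quot.ind with | mk p => ?_
  rcases p with v₂ | q
  · exact inl v₂
  · induction q using Quot.ind with | mk r => ?_
    rcases r with v₃ | v₄
    exacts [inr_inl v₃, inr_inr v₄]

variable (C₂ C₃ C₄ f₂ f₃ f₄ h₂₃ h₃₄)

def poAssocV :
    (poAssocLeft C₂ C₃ C₄ f₂ f₃ f₄ h₂₃ h₃₄).V → (poAssocRight C₂ C₃ C₄ f₂ f₃ f₄ h₂₃ h₃₄).V :=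
  Quot.lift (Sum.elim
    (Quot.lift (Sum.elim
      (fun v₂ => Quot.mk _ (.inl v₂))
      (fun v₃ => Quot.mk _ (.inr (Quot.mk _ (.inl v₃)))))
      (by rintro _ _ ⟨a, rfl, rfl⟩; exact Quot.sound ⟨a, rfl, rfl⟩))
    (fun v₄ => Quot.mk _ (.inr (Quot.mk _ (.inr v₄)))))
    (by
      rintro _ _ ⟨a, rfl, rfl⟩
      exact (Quot.sound ⟨a, rfl, rfl⟩).trans
        (congrArg (fun x => Quot.mk _ (Sum.inr x)) (Quot.sound ⟨a, rfl, rfl⟩)))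

def poAssocVInv :
    (poAssocRight C₂ C₃ C₄ f₂ f₃ f₄ h₂₃ h₃₄).V → (poAssocLeft C₂ C₃ C₄ f₂ f₃ f₄ h₂₃ h₃₄).V :=
  Quot.lift (Sum.elim
    (fun v₂ => Quot.mk _ (.inl (Quot.mk _ (.inl v₂))))
    (Quot.lift (Sum.elim
      (fun v₃ => Quot.mk _ (.inl (Quot.mk _ (.inr v₃))))
      (fun v₄ => Quot.mk _ (.inr v₄)))
      (by
        rintro _ _ ⟨a, rfl, rfl⟩
        exact (congrArg (fun x => Quot.mk _ (Sum.inl x)) (Quot.sound ⟨a, rfl, rfl⟩)).symm.trans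
          (Quot.sound ⟨a, rfl, rfl⟩))))
    (by
      rintro _ _ ⟨a, rfl, rfl⟩
      exact congrArg (fun x => Quot.mk _ (Sum.inl x)) (Quot.sound ⟨a, rfl, rfl⟩))

def poAssocEquivV :
    (poAssocLeft C₂ C₃ C₄ f₂ f₃ f₄ h₂₃ h₃₄).V ≃ (poAssocRight C₂ C₃ C₄ f₂ f₃ f₄ h₂₃ h₃₄).V where
  toFun := poAssocV C₂ C₃ C₄ f₂ f₃ f₄ h₂₃ h₃₄
  invFun := poAssocVInv C₂ C₃ C₄ f₂ f₃ f₄ h₂₃ h₃₄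
  left_inv := poAssocLeft_ind (fun _ => rfl) (fun _ => rfl) (fun _ => rfl)
  right_inv := poAssocRight_ind (fun _ => rfl) (fun _ => rfl) (fun _ => rfl)

def poAssocIso :
    CircIso (poAssocLeft C₂ C₃ C₄ f₂ f₃ f₄ h₂₃ h₃₄) (poAssocRight C₂ C₃ C₄ f₂ f₃ f₄ h₂₃ h₃₄) where
  eV := poAssocEquivV C₂ C₃ C₄ f₂ f₃ f₄ h₂₃ h₃₄
  eU := Equiv.sumAssoc _ _ _
  eI := Equiv.sumAssoc _ _ _
  eO := Equiv.sumAssoc _ _ _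
  hs := by rintro ((i | i) | i) <;> rfl
  ht := by rintro ((o | o) | o) <;> rfl
  htau := by rintro ((i | i) | i) <;> rfl
  hsigma := by rintro ((o | o) | o) <;> rfl
  hc := poAssocLeft_ind (fun _ => rfl) (fun _ => rfl) (fun _ => rfl)

end PoAssoc

theorem branching_assoc_general (C₂ C₃ C₄ : Circuit)
    {V₀ V₁ : Type}
    (i₂ : V₀ → C₂.V) (i₃ : V₀ → C₃.V) (i₄ : V₀ → C₄.V)
    (o₂ : V₁ → C₂.V) (o₃ : V₁ → C₃.V) (o₄ : V₁ → C₄.V)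
    (h₂₃ : ∀ x : V₀ ⊕ V₁, C₂.c (Sum.elim i₂ o₂ x) = C₃.c (Sum.elim i₃ o₃ x))
    (h₃₄ : ∀ x : V₀ ⊕ V₁, C₃.c (Sum.elim i₃ o₃ x) = C₄.c (Sum.elim i₄ o₄ x)) :
    Nonempty (CircIso
      (po (po C₂ C₃ (Sum.elim i₂ o₂) (Sum.elim i₃ o₃) h₂₃) C₄
        (fun x => poInl C₂ C₃ (Sum.elim i₂ o₂) (Sum.elim i₃ o₃) h₂₃
          (Sum.elim i₂ o₂ x))
        (Sum.elim i₄ o₄) (fun x => (h₂₃ x).trans (h₃₄ x)))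
      (po C₂ (po C₃ C₄ (Sum.elim i₃ o₃) (Sum.elim i₄ o₄) h₃₄)
        (Sum.elim i₂ o₂)
        (fun x => poInl C₃ C₄ (Sum.elim i₃ o₃) (Sum.elim i₄ o₄) h₃₄
          (Sum.elim i₃ o₃ x))
        (fun x => h₂₃ x))) :=
  ⟨poAssocIso C₂ C₃ C₄ (Sum.elim i₂ o₂) (Sum.elim i₃ o₃) (Sum.elim i₄ o₄) h₂₃ h₃₄⟩

/-- Branching is associative up to isomorphism:
`(λ₂ ?ρ₁ λ₃) ?ρ₃ λ₄ ≅ λ₂ ?ρ₄ (λ₃ ?ρ₂ λ₄)`, for circuits `λ₂, λ₃, λ₄` sharing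
common trivial adjoint domains `λ₀` (invars, variables `V₀`) and `λ₁` (outvars,
variables `V₁`); the iterated branchings use the derived adjoints obtained by
composing with the pushout injections. -/
theorem branching_assoc (C₂ C₃ C₄ : Circuit)
    {V₀ V₁ : Type} [Nonempty V₀] [Nonempty V₁]
    (i₂ : V₀ → C₂.V) (i₃ : V₀ → C₃.V) (i₄ : V₀ → C₄.V)
    (o₂ : V₁ → C₂.V) (o₃ : V₁ → C₃.V) (o₄ : V₁ → C₄.V)
    (hm₂ : Function.Injective (Sum.elim i₂ o₂))
    (hm₃ : Function.Injective (Sum.elim i₃ o₃))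
    (hm₄ : Function.Injective (Sum.elim i₄ o₄))
    (hi₂r : Set.range i₂ = C₂.invars) (hi₃r : Set.range i₃ = C₃.invars)
    (hi₄r : Set.range i₄ = C₄.invars)
    (ho₂r : Set.range o₂ = C₂.outvars) (ho₃r : Set.range o₃ = C₃.outvars)
    (ho₄r : Set.range o₄ = C₄.outvars)
    (h₂₃ : ∀ x : V₀ ⊕ V₁, C₂.c (Sum.elim i₂ o₂ x) = C₃.c (Sum.elim i₃ o₃ x))
    (h₃₄ : ∀ x : V₀ ⊕ V₁, C₃.c (Sum.elim i₃ o₃ x) = C₄.c (Sum.elim i₄ o₄ x)) :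
    Nonempty (CircIso
      (po (po C₂ C₃ (Sum.elim i₂ o₂) (Sum.elim i₃ o₃) h₂₃) C₄
        (fun x => poInl C₂ C₃ (Sum.elim i₂ o₂) (Sum.elim i₃ o₃) h₂₃
          (Sum.elim i₂ o₂ x))
        (Sum.elim i₄ o₄) (fun x => (h₂₃ x).trans (h₃₄ x)))
      (po C₂ (po C₃ C₄ (Sum.elim i₃ o₃) (Sum.elim i₄ o₄) h₃₄)
        (Sum.elim i₂ o₂)
        (fun x => poInl C₃ C₄ (Sum.elim i₃ o₃) (Sum.elim i₄ o₄) h₃₄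
          (Sum.elim i₃ o₃ x))
        (fun x => h₂₃ x))) :=
  branching_assoc_general C₂ C₃ C₄ i₂ i₃ i₄ o₂ o₃ o₄ h₂₃ h₃₄
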